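/- arXiv:2411.10502 — 3 statements merged into one kernel-verified Lean document; each statement's English description precedes it below -/
import Mathlib

section
/- (Proposition 3.3, first part) For every integer k ≥ 3, b(k−1) ≤ (4/(k+1))·b(k−3). -/
/-- `pq n = (p n, q n)` where `p n` (resp. `q n`) is the probability that the
exploitative player X, always guessing `2` or `n-1`, wins the misère search game
`MS(P_n)` against the uniformly random player R when playing first (resp. second):
`p 0 = p 1 = 0`, `q 0 = 0`,
`q n = (1/n) * ∑_{i=1}^{n} ((i-1)·p(i-1) + (n-i)·p(n-i) + 1)/n` for `n ≥ 1`, and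
`p n = 1/n + ((n-2)/n) * q (n-2)` for `n ≥ 2`. -/
noncomputable def pq : ℕ → ℝ × ℝ
  | 0 => (0, 0)
  | 1 =>
    (0,
      (1 / ((1 : ℕ) : ℝ)) * ∑ i ∈ (Finset.Icc 1 1).attach,
        (((i.1 - 1 : ℕ) : ℝ) * (pq (i.1 - 1)).1 +
          ((1 - i.1 : ℕ) : ℝ) * (pq (1 - i.1)).1 + 1) / ((1 : ℕ) : ℝ))
  | n + 2 =>
    (1 / ((n : ℝ) + 2) + ((n : ℝ) / ((n : ℝ) + 2)) * (pq n).2,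
      (1 / ((n : ℝ) + 2)) * ∑ i ∈ (Finset.Icc 1 (n + 2)).attach,
        (((i.1 - 1 : ℕ) : ℝ) * (pq (i.1 - 1)).1 +
          ((n + 2 - i.1 : ℕ) : ℝ) * (pq (n + 2 - i.1)).1 + 1) / ((n : ℝ) + 2))
  decreasing_by
  · have hm := i.2; simp only [Finset.mem_Icc] at hm; omega
  · have hm := i.2; simp only [Finset.mem_Icc] at hm; omega
  · omega
  · have hm := i.2; simp only [Finset.mem_Icc] at hm; omega
  · have hm := i.2; simp only [Finset.mem_Icc] at hm; omega

/-- X's winning probability in `MS(P_n)` playing first. -/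
noncomputable def p (n : ℕ) : ℝ := (pq n).1

/-- X's winning probability in `MS(P_n)` playing second. -/
noncomputable def q (n : ℕ) : ℝ := (pq n).2

/-- `s n = ∑_{i=1}^{n} i * p i`. -/
noncomputable def s (n : ℕ) : ℝ := ∑ i ∈ Finset.Icc 1 n, (i : ℝ) * p i

/-- `a k = (s k + 2(k+1)) / (k² + 7k + 6)`. -/
noncomputable def a (k : ℕ) : ℝ :=
  (s k + 2 * ((k : ℝ) + 1)) / ((k : ℝ) ^ 2 + 7 * (k : ℝ) + 6)

/-- `b k` is the maximum absolute difference between any two of `a k, a (k+1), a (k+2)`. -/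
noncomputable def b (k : ℕ) : ℝ :=
  max |a k - a (k + 1)| (max |a (k + 1) - a (k + 2)| |a k - a (k + 2)|)


/-!
Unwinding the recursions for `p` and `q` gives `(m+3) p(m+3) = 2 + 2 s(m)/(m+1)`, i.e.
`s(m+3) = s(m+2) + 2 + 2 s(m)/(m+1)`. In terms of `a` this becomes the three-term recursion
`a(m+3) - a(m+2) = -c(m) (a(m+2) - a(m))` with `c(m) = 2(m+6)/((m+4)(m+9))`. With `k = j+3`,
`b(j+2)` is at most the sum of the two new gaps `|a(j+3) - a(j+2)| ≤ c(j) b(j)` and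
`|a(j+4) - a(j+3)| ≤ c(j+1) (1 + c(j)) b(j)`, and `c(j) + c(j+1)(1 + c(j)) ≤ 4/(j+4)`.
-/

open Finset

lemma s_succ (n : ℕ) : s (n + 1) = s n + ((n : ℝ) + 1) * p (n + 1) := by
  rw [s, s, sum_Icc_succ_top (by omega : 1 ≤ n + 1)]
  push_cast
  ring

lemma sum_Icc_pred_mul_p (n : ℕ) :
    ∑ i ∈ Icc 1 (n + 1), ((i - 1 : ℕ) : ℝ) * p (i - 1) = s n := by
  induction n with
  | zero => simp [s, p, pq]
  | succ m ih =>
    rw [sum_Icc_succ_top (by omega : 1 ≤ m + 1 + 1), ih, s_succ]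
    push_cast
    ring_nf

lemma sum_Icc_sub_mul_p (n : ℕ) :
    ∑ i ∈ Icc 1 (n + 1), ((n + 1 - i : ℕ) : ℝ) * p (n + 1 - i) = s n := by
  rw [← sum_Icc_pred_mul_p n]
  refine sum_nbij' (fun i => n + 2 - i) (fun i => n + 2 - i) ?_ ?_ ?_ ?_ ?_ <;>
    simp only [mem_Icc] <;> intro i hi
  any_goals omega
  congr 2 <;> omega

lemma q_succ (n : ℕ) : q (n + 1) = (2 * s n + ((n : ℝ) + 1)) / ((n : ℝ) + 1) ^ 2 := by
  cases n with
  | zero =>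
    rw [q, pq, sum_attach (Icc 1 1) (fun i =>
        (((i - 1 : ℕ) : ℝ) * (pq (i - 1)).1 + ((1 - i : ℕ) : ℝ) * (pq (1 - i)).1 + 1) / ((1 : ℕ) : ℝ))]
    simp [pq, s]
  | succ m =>
    rw [q, pq, sum_attach (Icc 1 (m + 2)) (fun i =>
        (((i - 1 : ℕ) : ℝ) * (pq (i - 1)).1 + ((m + 2 - i : ℕ) : ℝ) * (pq (m + 2 - i)).1 + 1)
          / ((m : ℝ) + 2)),
      ← sum_div, sum_add_distrib, sum_add_distrib, sum_const, Nat.card_Icc]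
    have hpred := sum_Icc_pred_mul_p (m + 1)
    have hsub := sum_Icc_sub_mul_p (m + 1)
    simp only [p] at hpred hsub
    norm_num at hpred hsub ⊢
    rw [hpred, hsub]
    field_simp
    ring

lemma p_add_two (n : ℕ) : p (n + 2) = 1 / ((n : ℝ) + 2) + (n / ((n : ℝ) + 2)) * q n := by
  rw [p, pq, q]

lemma mul_p_add_three (m : ℕ) : ((m : ℝ) + 3) * p (m + 3) = 2 + 2 * s m / ((m : ℝ) + 1) := by
  rw [p_add_two, q_succ]
  push_cast
  field_simp
  ring

lemma s_add_three (m : ℕ) : s (m + 3) = s (m + 2) + 2 + 2 * s m / ((m : ℝ) + 1) := by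
  have h := mul_p_add_three m
  rw [s_succ (m + 2), show m + 2 + 1 = m + 3 from rfl]
  push_cast
  linear_combination h

noncomputable def gapFactor (m : ℕ) : ℝ := 2 * ((m : ℝ) + 6) / (((m : ℝ) + 4) * ((m : ℝ) + 9))

lemma gapFactor_nonneg (m : ℕ) : 0 ≤ gapFactor m := by
  unfold gapFactor
  positivity

lemma a_add_three_sub (m : ℕ) :
    a (m + 3) - a (m + 2) = -gapFactor m * (a (m + 2) - a m) := by
  rw [a, a, a, s_add_three, gapFactor]
  push_cast
  field_simp
  ring

lemma abs_a_add_three_sub (m : ℕ) :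
    |a (m + 3) - a (m + 2)| = gapFactor m * |a (m + 2) - a m| := by
  rw [a_add_three_sub, abs_mul, abs_neg, abs_of_nonneg (gapFactor_nonneg m)]

lemma gapFactor_add_le (j : ℕ) :
    gapFactor j + gapFactor (j + 1) * (1 + gapFactor j) ≤ 4 / ((j : ℝ) + 4) := by
  have key : 4 / ((j : ℝ) + 4) - (gapFactor j + gapFactor (j + 1) * (1 + gapFactor j)) =
      (10 * (j : ℝ) ^ 2 + 154 * j + 528) / ((j + 4) * (j + 9) * (j + 5) * (j + 10)) := by
    rw [gapFactor, gapFactor]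
    push_cast
    field_simp
    ring
  linarith [show 0 ≤ (10 * (j : ℝ) ^ 2 + 154 * j + 528) / ((j + 4) * (j + 9) * (j + 5) * (j + 10))
    by positivity]

lemma abs_a_add_one_sub_le_b (k : ℕ) : |a (k + 1) - a k| ≤ b k := by
  rw [abs_sub_comm]
  exact le_max_left _ _

lemma abs_a_add_two_sub_add_one_le_b (k : ℕ) : |a (k + 2) - a (k + 1)| ≤ b k := by
  rw [abs_sub_comm]
  exact (le_max_left _ _).trans (le_max_right _ _)

lemma abs_a_add_two_sub_le_b (k : ℕ) : |a (k + 2) - a k| ≤ b k := by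
  rw [abs_sub_comm]
  exact (le_max_right _ _).trans (le_max_right _ _)

lemma b_le_add (k : ℕ) : b k ≤ |a (k + 1) - a k| + |a (k + 2) - a (k + 1)| := by
  have h₁ := abs_nonneg (a (k + 1) - a k)
  have h₂ := abs_nonneg (a (k + 2) - a (k + 1))
  refine max_le ?_ (max_le ?_ ?_)
  · rw [abs_sub_comm]
    linarith
  · rw [abs_sub_comm]
    linarith
  · have h := abs_sub_le (a k) (a (k + 1)) (a (k + 2))
    rwa [abs_sub_comm (a k) (a (k + 1)), abs_sub_comm (a (k + 1)) (a (k + 2))] at h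

lemma abs_a_add_three_sub_le (m : ℕ) : |a (m + 3) - a (m + 2)| ≤ gapFactor m * b m := by
  rw [abs_a_add_three_sub]
  exact mul_le_mul_of_nonneg_left (abs_a_add_two_sub_le_b m) (gapFactor_nonneg m)

lemma abs_a_add_four_sub_le (m : ℕ) :
    |a (m + 4) - a (m + 3)| ≤ gapFactor (m + 1) * ((1 + gapFactor m) * b m) := by
  rw [abs_a_add_three_sub (m + 1)]
  refine mul_le_mul_of_nonneg_left ?_ (gapFactor_nonneg (m + 1))
  calc |a (m + 3) - a (m + 1)|
      ≤ |a (m + 3) - a (m + 2)| + |a (m + 2) - a (m + 1)| := abs_sub_le _ _ _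
    _ ≤ gapFactor m * b m + b m :=
      add_le_add (abs_a_add_three_sub_le m) (abs_a_add_two_sub_add_one_le_b m)
    _ = (1 + gapFactor m) * b m := by ring

/-- Proposition 3.3 (first part): for every `k ≥ 3`, `b (k-1) ≤ (4/(k+1)) * b (k-3)`. -/
theorem b_decay (k : ℕ) (hk : 3 ≤ k) :
    b (k - 1) ≤ (4 / ((k : ℝ) + 1)) * b (k - 3) := by
  obtain ⟨j, rfl⟩ : ∃ j, k = j + 3 := ⟨k - 3, by omega⟩
  rw [show j + 3 - 1 = j + 2 from rfl, show j + 3 - 3 = j by omega]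
  have hb : 0 ≤ b j := (abs_nonneg _).trans (abs_a_add_one_sub_le_b j)
  calc b (j + 2) ≤ |a (j + 3) - a (j + 2)| + |a (j + 4) - a (j + 3)| := b_le_add (j + 2)
    _ ≤ gapFactor j * b j + gapFactor (j + 1) * ((1 + gapFactor j) * b j) :=
      add_le_add (abs_a_add_three_sub_le j) (abs_a_add_four_sub_le j)
    _ = (gapFactor j + gapFactor (j + 1) * (1 + gapFactor j)) * b j := by ring
    _ ≤ 4 / ((j : ℝ) + 4) * b j := mul_le_mul_of_nonneg_right (gapFactor_add_le j) hb
    _ = 4 / (((j + 3 : ℕ) : ℝ) + 1) * b j := by push_cast; ring_nf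
end

section
/- (Proposition 3.5) Guessing 2 (equivalently n−1) is an optimal first move for X against the random player in MS(P_n): for every integer n ≥ 2 and every integer x with 1 ≤ x ≤ n, (x−1)·q(x−1) + (n−x)·q(n−x) ≤ q(1) + (n−2)·q(n−2). (Here (1/n)·((x−1)·q(x−1) + (n−x)·q(n−x)) is X's winning probability when first guessing x, and the choice x = 2 gives the right-hand side divided by n.) -/
noncomputable def S (n : ℕ) : ℝ := ∑ j ∈ Finset.range n, (j : ℝ) * p j

lemma p_rec (n : ℕ) : p (n+2) = 1 / ((n : ℝ) + 2) + ((n : ℝ) / ((n : ℝ) + 2)) * q n := by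
  rw [p, pq]; rfl

lemma sumA (N : ℕ) :
    ∑ i ∈ Finset.Icc 1 N, ((i - 1 : ℕ) : ℝ) * p (i - 1) = S N := by
  rw [show Finset.Icc 1 N = Finset.Ico 1 (N+1) by rfl, Finset.sum_Ico_eq_sum_range]
  simp [S]

lemma sumB (N : ℕ) :
    ∑ i ∈ Finset.Icc 1 N, ((N - i : ℕ) : ℝ) * p (N - i) = S N := by
  rw [show Finset.Icc 1 N = Finset.Ico 1 (N+1) by rfl, Finset.sum_Ico_eq_sum_range]
  simp only [Nat.add_sub_cancel]
  rw [← Finset.sum_range_reflect (fun j => ((N - (1 + j) : ℕ) : ℝ) * p (N - (1 + j))) N]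
  apply Finset.sum_congr rfl
  intro i hi
  simp only [Finset.mem_range] at hi
  congr 2 <;> omega

lemma q_formula (m : ℕ) :
    (((m : ℝ) + 2))^2 * q (m + 2) = ((m : ℝ) + 2) + 2 * S (m + 2) := by
  have h2 : ((m : ℝ) + 2) ≠ 0 := by positivity
  rw [q, pq]
  show (((m:ℝ)+2))^2 * ((1 / ((m : ℝ) + 2)) * ∑ i ∈ (Finset.Icc 1 (m + 2)).attach,
        (((i.1 - 1 : ℕ) : ℝ) * p (i.1 - 1) +
          ((m + 2 - i.1 : ℕ) : ℝ) * p (m + 2 - i.1) + 1) / ((m : ℝ) + 2)) = _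
  rw [Finset.sum_attach (Finset.Icc 1 (m+2)) (fun j => (((j - 1 : ℕ) : ℝ) * p (j - 1) +
          ((m + 2 - j : ℕ) : ℝ) * p (m + 2 - j) + 1) / ((m : ℝ) + 2))]
  rw [← Finset.sum_div, Finset.sum_add_distrib, Finset.sum_add_distrib, sumA, sumB]
  rw [Finset.sum_const, Nat.card_Icc, Nat.add_sub_cancel]
  field_simp
  push_cast; ring

noncomputable def f (k : ℕ) : ℝ := (k : ℝ) * q k

lemma p1 : p 1 = 0 := by rw [p, pq]
lemma q0 : q 0 = 0 := by rw [q, pq]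
lemma q1 : q 1 = 1 := by
  rw [q, pq]
  rw [Finset.sum_attach (Finset.Icc 1 1) (fun j => (((j - 1 : ℕ) : ℝ) * (pq (j - 1)).1 +
          ((1 - j : ℕ) : ℝ) * (pq (1 - j)).1 + 1) / ((1 : ℕ) : ℝ))]
  norm_num

lemma f0 : f 0 = 0 := by simp [f, q0]
lemma f1 : f 1 = 1 := by simp [f, q1]
lemma S0 : S 0 = 0 := by simp [S]
lemma S1 : S 1 = 0 := by simp [S]
lemma S2 : S 2 = 0 := by
  rw [S, Finset.sum_range_succ, Finset.sum_range_succ]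
  simp [p1]
lemma f2 : f 2 = 1 := by
  have h := q_formula 0
  rw [S2] at h
  have : q 2 = 1/2 := by norm_num at h; linarith
  rw [f, this]; norm_num

lemma S_succ (n : ℕ) : S (n+1) = S n + (n : ℝ) * p n := by
  rw [S, Finset.sum_range_succ]; rfl

lemma np_rec (m : ℕ) : ((m:ℝ)+2) * p (m+2) = 1 + f m := by
  have h2 : ((m : ℝ) + 2) ≠ 0 := by positivity
  rw [p_rec, f]
  field_simp

lemma master (m : ℕ) :
    ((m:ℝ)+3) * f (m+3) = ((m:ℝ)+2) * f (m+2) + 3 + 2 * f m := by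
  have h1 := q_formula (m+1)
  have h2 := q_formula m
  have h3 := S_succ (m+2)
  have h4 := np_rec m
  have e1 : ((m:ℝ)+3) * f (m+3) = (((m+1:ℕ):ℝ) + 2)^2 * q (m+1+2) := by
    rw [f]; push_cast; ring
  have e2 : ((m:ℝ)+2) * f (m+2) = (((m:ℕ):ℝ) + 2)^2 * q (m+2) := by
    rw [f]; push_cast; ring
  rw [e1, h1, e2, h2]
  push_cast at h3 ⊢
  nlinarith [h3, h4]

noncomputable def G (j : ℕ) : ℝ := f (j+1) - f j

lemma G0 : G 0 = 1 := by rw [G, f0, f1]; norm_num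
lemma G1 : G 1 = 0 := by
  rw [G, f2, f1]; norm_num
lemma G2 : G 2 = 2/3 := by
  have h := master 0
  rw [f0, f2] at h
  rw [G, f2]
  norm_num at h ⊢
  linarith

lemma Grec (m : ℕ) :
    ((m:ℝ)+4) * G (m+3) = ((m:ℝ)+2) * G (m+2) + 2 * G m := by
  have h1 := master (m+1)
  have h2 := master m
  push_cast at h1
  simp only [G]
  have e : m + 1 + 3 = m + 4 := by omega
  rw [e] at h1
  push_cast
  linear_combination h1 - h2

lemma G3v : G 3 = 5/6 := by have h := Grec 0; rw [G2, G0] at h; norm_num at h; linarith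
lemma G4v : G 4 = 1/2 := by have h := Grec 1; rw [G3v, G1] at h; norm_num at h; linarith
lemma G5v : G 5 = 5/9 := by have h := Grec 2; rw [G4v, G2] at h; norm_num at h; linarith
lemma G6v : G 6 = 40/63 := by have h := Grec 3; rw [G5v, G3v] at h; norm_num at h; linarith
lemma G7v : G 7 = 101/168 := by have h := Grec 4; rw [G6v, G4v] at h; norm_num at h; linarith
lemma G8v : G 8 = 383/648 := by have h := Grec 5; rw [G7v, G5v] at h; norm_num at h; linarith
lemma G9v : G 9 = 3401/5670 := by have h := Grec 6; rw [G8v, G6v] at h; norm_num at h; linarith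
lemma G10v : G 10 = 8317/13860 := by have h := Grec 7; rw [G9v, G7v] at h; norm_num at h; linarith
lemma G11v : G 11 = 179197/299376 := by have h := Grec 8; rw [G10v, G8v] at h; norm_num at h; linarith
lemma G12v : G 12 = 151319/252720 := by have h := Grec 9; rw [G11v, G9v] at h; norm_num at h; linarith
lemma G13v : G 13 = 13597741/22702680 := by have h := Grec 10; rw [G12v, G10v] at h; norm_num at h; linarith

lemma window_lo (lo : ℝ) (k : ℕ) (h0 : lo ≤ G k) (h1 : lo ≤ G (k+1)) (h2 : lo ≤ G (k+2)) :
    ∀ x, k ≤ x → lo ≤ G x := by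
  intro x
  induction x using Nat.strong_induction_on with
  | _ x ih =>
    intro hx
    rcases Nat.lt_or_ge x (k+3) with h | h
    · rcases (show x = k ∨ x = k+1 ∨ x = k+2 by omega) with rfl | rfl | rfl <;> assumption
    · obtain ⟨m, hm, rfl⟩ : ∃ m, k ≤ m ∧ x = m + 3 := ⟨x - 3, by omega, by omega⟩
      have ha := ih (m+2) (by omega) (by omega)
      have hb := ih m (by omega) hm
      have hrec := Grec m
      have hpos : (0:ℝ) < (m:ℝ) + 4 := by positivity
      have : ((m:ℝ)+4) * lo ≤ ((m:ℝ)+4) * G (m+3) := by nlinarith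
      exact le_of_mul_le_mul_left this hpos

lemma window_hi (hi : ℝ) (k : ℕ) (h0 : G k ≤ hi) (h1 : G (k+1) ≤ hi) (h2 : G (k+2) ≤ hi) :
    ∀ x, k ≤ x → G x ≤ hi := by
  intro x
  induction x using Nat.strong_induction_on with
  | _ x ih =>
    intro hx
    rcases Nat.lt_or_ge x (k+3) with h | h
    · rcases (show x = k ∨ x = k+1 ∨ x = k+2 by omega) with rfl | rfl | rfl <;> assumption
    · obtain ⟨m, hm, rfl⟩ : ∃ m, k ≤ m ∧ x = m + 3 := ⟨x - 3, by omega, by omega⟩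
      have ha := ih (m+2) (by omega) (by omega)
      have hb := ih m (by omega) hm
      have hrec := Grec m
      have hpos : (0:ℝ) < (m:ℝ) + 4 := by positivity
      have : ((m:ℝ)+4) * G (m+3) ≤ ((m:ℝ)+4) * hi := by nlinarith
      exact le_of_mul_le_mul_left this hpos

lemma Glb3 : ∀ x, 3 ≤ x → 1/2 ≤ G x :=
  window_lo _ 3 (by rw [G3v]; norm_num) (by rw [G4v]) (by rw [G5v]; norm_num)
lemma Gub3 : ∀ x, 3 ≤ x → G x ≤ 5/6 :=
  window_hi _ 3 (by rw [G3v]) (by rw [G4v]; norm_num) (by rw [G5v]; norm_num)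
lemma Glb5 : ∀ x, 5 ≤ x → 5/9 ≤ G x :=
  window_lo _ 5 (by rw [G5v]) (by rw [G6v]; norm_num) (by rw [G7v]; norm_num)
lemma Glb8 : ∀ x, 8 ≤ x → 383/648 ≤ G x :=
  window_lo _ 8 (by rw [G8v]) (by rw [G9v]; norm_num) (by rw [G10v]; norm_num)
lemma Glb11 : ∀ x, 11 ≤ x → 179197/299376 ≤ G x :=
  window_lo _ 11 (by rw [G11v]) (by rw [G12v]; norm_num) (by rw [G13v]; norm_num)

lemma G_nonneg : ∀ m, 0 ≤ G m := by
  intro m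
  rcases Nat.lt_or_ge m 3 with h | h
  · rcases (show m = 0 ∨ m = 1 ∨ m = 2 by omega) with rfl | rfl | rfl <;>
      simp [G0, G1, G2] <;> norm_num
  · linarith [Glb3 m h]

lemma G_le_one : ∀ m, G m ≤ 1 := by
  intro m
  rcases Nat.lt_or_ge m 3 with h | h
  · rcases (show m = 0 ∨ m = 1 ∨ m = 2 by omega) with rfl | rfl | rfl <;>
      simp [G0, G1, G2] <;> norm_num
  · linarith [Gub3 m h]

noncomputable def D (j : ℕ) : ℝ := G (j+1) - G j

lemma Drec (m : ℕ) : ((m:ℝ)+4) * D (m+2) = -2 * (D (m+1) + D m) := by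
  simp only [D]
  linear_combination Grec m

lemma decay_pair : ∀ j, 10 ≤ j → |D j| ≤ 2*(1/2:ℝ)^j ∧ |D (j+1)| ≤ 2*(1/2:ℝ)^(j+1) := by
  intro j hj
  induction j, hj using Nat.le_induction with
  | base =>
    constructor
    · rw [abs_le]; rw [D, G11v, G10v]; norm_num
    · rw [abs_le]; rw [D, G12v, G11v]; norm_num
  | succ j hj ih =>
    obtain ⟨h1, h2⟩ := ih
    refine ⟨h2, ?_⟩
    have hr := Drec j
    have hj4 : (0:ℝ) < (j:ℝ) + 4 := by positivity
    have habs : ((j:ℝ)+4) * |D (j+2)| ≤ 2 * (|D (j+1)| + |D j|) := by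
      have : |((j:ℝ)+4) * D (j+2)| = |(-2) * (D (j+1) + D j)| := by rw [hr]
      rw [abs_mul, abs_mul, abs_of_pos hj4] at this
      calc ((j:ℝ)+4) * |D (j+2)| = |(-2:ℝ)| * |D (j+1) + D j| := this
        _ ≤ 2 * (|D (j+1)| + |D j|) := by
            rw [abs_neg, abs_two]
            have := abs_add_le (D (j+1)) (D j)
            linarith
    have hp : (0:ℝ) < (1/2:ℝ)^j := by positivity
    have hjR : (10:ℝ) ≤ (j:ℝ) := by exact_mod_cast hj
    have hpow1 : (1/2:ℝ)^(j+1) = (1/2)^j * (1/2) := pow_succ _ _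
    have hpow2 : (1/2:ℝ)^(j+2) = (1/2)^j * (1/4) := by rw [pow_add]; ring
    have hDnn : (0:ℝ) ≤ |D (j+2)| := abs_nonneg _
    rw [hpow2]
    nlinarith [habs, h1, h2]

lemma travel : ∀ j, 10 ≤ j → ∀ x, j ≤ x → |G x - G j| ≤ 4*(1/2:ℝ)^j - 4*(1/2:ℝ)^x := by
  intro j hj x hx
  induction x, hx using Nat.le_induction with
  | base => simp
  | succ x hx ih =>
    have hD : |D x| ≤ 2*(1/2:ℝ)^x := (decay_pair x (by omega)).1
    have e : G (x+1) - G j = (G x - G j) + D x := by rw [D]; ring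
    have hpow : (1/2:ℝ)^(x+1) = (1/2)^x * (1/2) := pow_succ _ _
    calc |G (x+1) - G j| ≤ |G x - G j| + |D x| := by rw [e]; exact abs_add_le _ _
      _ ≤ (4*(1/2:ℝ)^j - 4*(1/2)^x) + 2*(1/2)^x := by linarith
      _ = 4*(1/2:ℝ)^j - 4*(1/2)^(x+1) := by rw [hpow]; ring

lemma tail_bound : ∀ j, 10 ≤ j → ∀ x, j ≤ x → G j - G x ≤ 4*(1/2:ℝ)^j := by
  intro j hj x hx
  have h := travel j hj x hx
  have h2 : (0:ℝ) < (1/2:ℝ)^x := by positivity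
  have := abs_le.mp h
  linarith [this.1]

noncomputable def U (i : ℕ) : ℝ :=
  if i = 0 then 1/6
  else if i = 1 then 5/18
  else if i = 2 ∨ i = 3 ∨ i = 6 then 0
  else if i = 4 then 40/63 - 179197/299376
  else if i = 5 then 101/168 - 179197/299376
  else if i = 7 then 3401/5670 - 179197/299376
  else if i = 8 then 8317/13860 - 179197/299376
  else (1/2)^i

lemma U_nonneg (i : ℕ) : 0 ≤ U i := by
  rw [U]; split_ifs <;> norm_num

lemma U_tail (i : ℕ) (hi : 9 ≤ i) : U i = (1/2:ℝ)^i := by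
  rw [U]; split_ifs <;> first | rfl | omega

lemma termwise (c t i : ℕ) (hic : i ≤ c) :
    G (i+2) - G (c+t+3+i) ≤ U i := by
  set x := c+t+3+i with hxdef
  have hx : 2*i+3 ≤ x := by omega
  rcases Nat.lt_or_ge i 9 with h9 | h9
  · interval_cases i
    · rw [U]; norm_num [G2]; linarith [Glb3 x (by omega)]
    · rw [U]; norm_num [G3v]; linarith [Glb5 x (by omega)]
    · rw [U]; norm_num [G4v]; linarith [Glb3 x (by omega)]
    · rw [U]; norm_num [G5v]; linarith [Glb8 x (by omega)]
    · rw [U]; norm_num [G6v]; linarith [Glb11 x (by omega)]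
    · rw [U]; norm_num [G7v]; linarith [Glb11 x (by omega)]
    · rw [U]; norm_num [G8v]; linarith [Glb11 x (by omega)]
    · rw [U]; norm_num [G9v]; linarith [Glb11 x (by omega)]
    · rw [U]; norm_num [G10v]; linarith [Glb11 x (by omega)]
  · rw [U_tail i h9]
    have h := tail_bound (i+2) (by omega) x (by omega)
    have e : 4*(1/2:ℝ)^(i+2) = (1/2)^i := by rw [pow_add]; ring
    linarith [h, e.ge]

lemma Usum_head : ∑ i ∈ Finset.range 9, U i = 72775/149688 := by
  simp [Finset.sum_range_succ, U]
  norm_num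

lemma Usum_tail : ∀ c, 9 ≤ c → ∑ i ∈ Finset.Ico 9 (c+1), U i ≤ (1/2:ℝ)^8 - (1/2:ℝ)^c := by
  intro c hc
  induction c, hc using Nat.le_induction with
  | base =>
    rw [show Finset.Ico 9 10 = {9} by rfl, Finset.sum_singleton, U_tail 9 (by omega)]
    norm_num
  | succ c hc ih =>
    rw [Finset.sum_Ico_succ_top (by omega), U_tail (c+1) (by omega)]
    have : (1/2:ℝ)^(c+1) = (1/2)^c * (1/2) := pow_succ _ _
    linarith

lemma Usum (c : ℕ) : ∑ i ∈ Finset.range (c+1), U i ≤ 99/200 := by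
  rcases Nat.lt_or_ge c 9 with h | h
  · have mono : ∑ i ∈ Finset.range (c+1), U i ≤ ∑ i ∈ Finset.range 9, U i := by
      apply Finset.sum_le_sum_of_subset_of_nonneg
      · apply Finset.range_subset_range.mpr; omega
      · intro i _ _; exact U_nonneg i
    rw [Usum_head] at mono
    linarith
  · rw [Finset.range_eq_Ico, ← Finset.sum_Ico_consecutive _ (by omega : 0 ≤ 9) (by omega : 9 ≤ c+1)]
    have h1 : ∑ i ∈ Finset.Ico 0 9, U i = 72775/149688 := by
      rw [← Finset.range_eq_Ico]; exact Usum_head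
    have h2 := Usum_tail c h
    have h3 : (0:ℝ) < (1/2:ℝ)^c := by positivity
    rw [h1]
    norm_num at h2 ⊢
    linarith

lemma fJ : ∀ t, f (t+2) = 1 + ∑ i ∈ Finset.range t, G (i+2) := by
  intro t
  induction t with
  | zero => simp [f2]
  | succ t ih =>
    show f (t+3) = _
    rw [Finset.sum_range_succ]
    have h : G (t+2) = f (t+3) - f (t+2) := rfl
    linarith [ih, h.ge, h.le]

lemma margin_id (c t : ℕ) :
    1 + f (2*c+t+5) - f (c+3) - f (c+t+3) =
      G (2*c+t+4) - ∑ i ∈ Finset.range (c+1), (G (i+2) - G (c+t+3+i)) := by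
  have h1 : f (2*c+t+5) = 1 + ∑ i ∈ Finset.range (2*c+t+3), G (i+2) := by
    have h := fJ (2*c+t+3)
    rw [show 2*c+t+3+2 = 2*c+t+5 from by omega] at h; exact h
  have h2 : f (c+3) = 1 + ∑ i ∈ Finset.range (c+1), G (i+2) := fJ (c+1)
  have h3 : f (c+t+3) = 1 + ∑ i ∈ Finset.range (c+t+1), G (i+2) := by
    have h := fJ (c+t+1)
    rw [show c+t+1+2 = c+t+3 from by omega] at h; exact h
  rw [h1, h2, h3]
  have split : ∑ i ∈ Finset.range (2*c+t+3), G (i+2) =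
      ∑ i ∈ Finset.range (c+t+1), G (i+2) + ∑ i ∈ Finset.Ico (c+t+1) (2*c+t+3), G (i+2) := by
    rw [Finset.range_eq_Ico, Finset.range_eq_Ico, Finset.sum_Ico_consecutive _ (by omega : 0 ≤ c+t+1) (by omega : c+t+1 ≤ 2*c+t+3)]
  have reindex : ∑ i ∈ Finset.Ico (c+t+1) (2*c+t+3), G (i+2) =
      ∑ i ∈ Finset.range (c+2), G (c+t+3+i) := by
    rw [Finset.sum_Ico_eq_sum_range]
    apply Finset.sum_congr
    · congr 1; omega
    · intro i _; congr 1; omega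
  have last : ∑ i ∈ Finset.range (c+2), G (c+t+3+i) =
      ∑ i ∈ Finset.range (c+1), G (c+t+3+i) + G (2*c+t+4) := by
    rw [Finset.sum_range_succ]; congr 2; omega
  rw [split, reindex, last, Finset.sum_sub_distrib]
  ring

lemma aux (a b : ℕ) (hab : a ≤ b) : f a + f b ≤ 1 + f (a + b - 1) := by
  match a, hab with
  | 0, _ =>
    rw [f0]
    match b with
    | 0 => rw [f0]; norm_num
    | Nat.succ m =>
      have : G m = f (m+1) - f m := rfl
      have h := G_le_one m
      rw [this] at h
      simpa using by linarith
  | 1, hab =>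
    have : 1 + b - 1 = b := by omega
    rw [this, f1]
  | 2, hab =>
    have : 2 + b - 1 = b + 1 := by omega
    rw [this, f2]
    have h := G_nonneg b
    have : G b = f (b+1) - f b := rfl
    rw [this] at h
    linarith
  | (c+3), hab =>
    obtain ⟨t, rfl⟩ : ∃ t, b = c+t+3 := ⟨b - c - 3, by omega⟩
    have e : c+3 + (c+t+3) - 1 = 2*c+t+5 := by omega
    rw [e]
    have hm := margin_id c t
    have hsum : ∑ i ∈ Finset.range (c+1), (G (i+2) - G (c+t+3+i)) ≤ 99/200 := by
      calc ∑ i ∈ Finset.range (c+1), (G (i+2) - G (c+t+3+i))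
          ≤ ∑ i ∈ Finset.range (c+1), U i := by
            apply Finset.sum_le_sum
            intro i hi
            exact termwise c t i (by simp at hi; omega)
        _ ≤ 99/200 := Usum c
    have hG : 1/2 ≤ G (2*c+t+4) := Glb3 _ (by omega)
    linarith


/-- Proposition 3.5: guessing `2` (equivalently `n-1`) is an optimal first move for
X against the random player in `MS(P_n)`: for all `n ≥ 2` and `1 ≤ x ≤ n`,
`(x-1)·q(x-1) + (n-x)·q(n-x) ≤ q 1 + (n-2)·q(n-2)`. -/
theorem guess_two_optimal (n x : ℕ) (hn : 2 ≤ n) (hx1 : 1 ≤ x) (hx2 : x ≤ n) :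
    ((x - 1 : ℕ) : ℝ) * q (x - 1) + ((n - x : ℕ) : ℝ) * q (n - x) ≤
      q 1 + ((n - 2 : ℕ) : ℝ) * q (n - 2) := by
  have goal' : f (x-1) + f (n-x) ≤ 1 + f (n-2) := by
    rcases le_total (x-1) (n-x) with h | h
    · have e : n - 2 = (x-1) + (n-x) - 1 := by omega
      rw [e]; exact aux _ _ h
    · have e : n - 2 = (n-x) + (x-1) - 1 := by omega
      rw [e]
      linarith [aux _ _ h]
  rw [q1]
  exact goal'
end

section
/- (Proposition 3.6) If a is the limit of the sequence (a(k)), then both p(n) → 2a and q(n) → 2a as n → ∞; that is, the winning probability of the exploitative player X against the random player on MS(P_n), playing either first or second, tends to 2a as n → ∞. -/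
lemma pq_fst (j : ℕ) : (pq j).1 = p j := rfl

lemma s_eq (m : ℕ) : s m = ∑ i ∈ Finset.range (m+1), (i:ℝ) * p i := by
  induction m with
  | zero => simp [s]
  | succ k ih =>
      have h1 : s (k+1) = s k + ((k+1:ℕ):ℝ) * p (k+1) := by
        rw [s, Finset.sum_Icc_succ_top (by omega : 1 ≤ k+1), ← s]
      rw [h1, ih, Finset.sum_range_succ (fun i => (i:ℝ) * p i) (k+1)]

lemma key (m : ℕ) :
    ∑ i ∈ Finset.Icc 1 (m+1), (((i-1:ℕ):ℝ) * p (i-1) + (((m+1)-i:ℕ):ℝ) * p ((m+1)-i) + 1)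
      = 2 * s m + ((m:ℝ)+1) := by
  have h1 : ∑ i ∈ Finset.Icc 1 (m+1), ((i-1:ℕ):ℝ) * p (i-1)
      = ∑ i ∈ Finset.range (m+1), (i:ℝ) * p i := by
    rw [← Finset.Ico_add_one_right_eq_Icc, Finset.sum_Ico_eq_sum_range]
    simp
  have h2 : ∑ i ∈ Finset.Icc 1 (m+1), (((m+1)-i:ℕ):ℝ) * p ((m+1)-i)
      = ∑ i ∈ Finset.Icc 1 (m+1), ((i-1:ℕ):ℝ) * p (i-1) := by
    apply Finset.sum_nbij' (fun i => m+2-i) (fun j => m+2-j) <;>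
      (intro a ha; simp only [Finset.mem_Icc] at *) <;> try omega
    congr 2 <;> omega
  rw [Finset.sum_add_distrib, Finset.sum_add_distrib, h1, h2, h1, s_eq]
  simp [Nat.card_Icc]
  ring

lemma q_eq (m : ℕ) : q (m+1) = (2 * s m + ((m:ℝ)+1)) / ((m:ℝ)+1)^2 := by
  cases m with
  | zero =>
      show (pq 1).2 = _
      rw [pq]
      rw [Finset.sum_attach (Finset.Icc 1 1) (fun i => (((i - 1 : ℕ) : ℝ) * (pq (i - 1)).1 +
          ((1 - i : ℕ) : ℝ) * (pq (1 - i)).1 + 1) / ((1 : ℕ) : ℝ))]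
      simp [s, pq]
  | succ k =>
      show (pq (k+2)).2 = _
      rw [pq]
      rw [Finset.sum_attach (Finset.Icc 1 (k+2)) (fun i => (((i - 1 : ℕ) : ℝ) * (pq (i - 1)).1 +
          ((k + 2 - i : ℕ) : ℝ) * (pq (k + 2 - i)).1 + 1) / ((k : ℝ) + 2))]
      simp only [pq_fst, ← Finset.sum_div]
      have := key (k+1)
      push_cast at this ⊢
      rw [show (k:ℝ)+1+1 = (k:ℝ)+2 by ring] at this
      rw [this]
      have hk : ((k:ℝ)+2) ≠ 0 := by positivity
      field_simp
      ring

lemma p_eq (m : ℕ) : p (m+2) = 1 / ((m : ℝ) + 2) + ((m : ℝ) / ((m : ℝ) + 2)) * q m := by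
  show (pq (m+2)).1 = _
  rw [pq]
  rfl

/-- Proposition 3.6: if `a k → L`, then `p n → 2L` and `q n → 2L` as `n → ∞`. -/
theorem p_q_tendsto_two_a (L : ℝ) (hL : Filter.Tendsto a Filter.atTop (nhds L)) :
    Filter.Tendsto p Filter.atTop (nhds (2 * L)) ∧
      Filter.Tendsto q Filter.atTop (nhds (2 * L)) := by
  -- a' k = s k / ((k+1)(k+6)) tends to L
  set a' : ℕ → ℝ := fun k => s k / (((k:ℝ)+1) * ((k:ℝ)+6)) with ha'def
  have ha'eq : ∀ k : ℕ, a' k = a k - 2 / ((k:ℝ)+6) := by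
    intro k
    have h1 : ((k:ℝ)+1) ≠ 0 := by positivity
    have h6 : ((k:ℝ)+6) ≠ 0 := by positivity
    rw [ha'def, a, show ((k:ℝ)^2 + 7*(k:ℝ) + 6) = ((k:ℝ)+1) * ((k:ℝ)+6) by ring]
    field_simp
    ring
  have h6to : Filter.Tendsto (fun k : ℕ => 2 / ((k:ℝ)+6)) Filter.atTop (nhds 0) := by
    apply Filter.Tendsto.div_atTop tendsto_const_nhds
    exact Filter.tendsto_atTop_add_const_right _ 6 tendsto_natCast_atTop_atTop
  have ha' : Filter.Tendsto a' Filter.atTop (nhds L) := by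
    have := hL.sub h6to
    rw [sub_zero] at this
    exact this.congr fun k => (ha'eq k).symm
  have hinv : Filter.Tendsto (fun n : ℕ => 1 / (n:ℝ)) Filter.atTop (nhds 0) :=
    tendsto_const_div_atTop_nhds_zero_nat 1
  -- q n = 2 * a' (n-1) * (1 + 5/n) + 1/n  for n ≥ 1
  have hq : Filter.Tendsto q Filter.atTop (nhds (2 * L)) := by
    have hcong : ∀ᶠ n : ℕ in Filter.atTop,
        2 * a' (n-1) * (1 + 5 / (n:ℝ)) + 1 / (n:ℝ) = q n := by
      filter_upwards [Filter.eventually_ge_atTop 1] with n hn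
      obtain ⟨m, rfl⟩ : ∃ m, n = m + 1 := ⟨n - 1, by omega⟩
      rw [q_eq]
      simp only [Nat.add_sub_cancel, ha'def]
      have h1 : ((m:ℝ)+1) ≠ 0 := by positivity
      have h6 : ((m:ℝ)+6) ≠ 0 := by positivity
      push_cast
      field_simp
      ring
    have hA : Filter.Tendsto (fun n : ℕ => a' (n-1)) Filter.atTop (nhds L) :=
      ha'.comp (Filter.tendsto_sub_atTop_nat 1)
    have h5 : Filter.Tendsto (fun n : ℕ => 5 / (n:ℝ)) Filter.atTop (nhds 0) :=
      tendsto_const_div_atTop_nhds_zero_nat 5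
    have hmain : Filter.Tendsto (fun n : ℕ => 2 * a' (n-1) * (1 + 5 / (n:ℝ)) + 1 / (n:ℝ))
        Filter.atTop (nhds (2 * L * (1 + 0) + 0)) :=
      ((tendsto_const_nhds.mul hA).mul (tendsto_const_nhds.add h5)).add hinv
    rw [show 2 * L * (1 + 0) + 0 = 2 * L by ring] at hmain
    exact Filter.Tendsto.congr' hcong hmain
  refine ⟨?_, hq⟩
  -- p n = 1/n + (1 - 2/n) * q (n-2)  for n ≥ 2
  have hcong : ∀ᶠ n : ℕ in Filter.atTop,
      1 / (n:ℝ) + (1 - 2 / (n:ℝ)) * q (n-2) = p n := by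
    filter_upwards [Filter.eventually_ge_atTop 2] with n hn
    obtain ⟨m, rfl⟩ : ∃ m, n = m + 2 := ⟨n - 2, by omega⟩
    rw [p_eq]
    simp only [Nat.add_sub_cancel]
    have h2 : ((m:ℝ)+2) ≠ 0 := by positivity
    push_cast
    field_simp
    ring
  have hQ : Filter.Tendsto (fun n : ℕ => q (n-2)) Filter.atTop (nhds (2 * L)) :=
    hq.comp (Filter.tendsto_sub_atTop_nat 2)
  have h2n : Filter.Tendsto (fun n : ℕ => 2 / (n:ℝ)) Filter.atTop (nhds 0) :=
    tendsto_const_div_atTop_nhds_zero_nat 2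
  have hmain : Filter.Tendsto (fun n : ℕ => 1 / (n:ℝ) + (1 - 2 / (n:ℝ)) * q (n-2))
      Filter.atTop (nhds (0 + (1 - 0) * (2 * L))) :=
    hinv.add ((tendsto_const_nhds.sub h2n).mul hQ)
  rw [show 0 + (1 - 0) * (2 * L) = 2 * L by ring] at hmain
  exact Filter.Tendsto.congr' hcong hmain
end
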